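/- Let n, k, r be integers with k, r ≥ 2 and n ≥ k + 1. If H is a vertex-k-maximal r-uniform hypergraph on n vertices, then |E(H)| ≥ C(n, r) − C(n − k, r), where C(a, b) denotes the binomial coefficient (equal to 0 when b > a). -/

import Mathlib

/-- A finite hypergraph: a finite vertex set together with a finite set of
non-empty edges, each a subset of the vertex set. -/
structure FinHypergraph where
  verts : Finset ℕ
  edges : Finset (Finset ℕ)
  edge_sub : ∀ e ∈ edges, e ⊆ verts
  edge_nonempty : ∀ e ∈ edges, e.Nonempty

namespace FinHypergraph

/-- `H` is `r`-uniform if every edge has cardinality `r`. -/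
def IsUniform (H : FinHypergraph) (r : ℕ) : Prop := ∀ e ∈ H.edges, e.card = r

/-- `H'` is a subhypergraph of `H`. -/
def IsSub (H' H : FinHypergraph) : Prop := H'.verts ⊆ H.verts ∧ H'.edges ⊆ H.edges

/-- Two vertices are adjacent if some edge contains both. -/
def Adj (H : FinHypergraph) (u v : ℕ) : Prop := ∃ e ∈ H.edges, u ∈ e ∧ v ∈ e

/-- `H` is connected if every pair of vertices is joined by a path
(equivalently, a walk, i.e. is reachable via the adjacency relation). -/
def Connected (H : FinHypergraph) : Prop :=
  ∀ u ∈ H.verts, ∀ v ∈ H.verts, Relation.ReflTransGen H.Adj u v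

/-- The subhypergraph of `H` induced by the vertex set `Y`. -/
def induce (H : FinHypergraph) (Y : Finset ℕ) : FinHypergraph where
  verts := H.verts ∩ Y
  edges := H.edges.filter (fun e => e ⊆ Y)
  edge_sub := by
    intro e he
    simp only [Finset.mem_filter] at he
    exact Finset.subset_inter (H.edge_sub e he.1) he.2
  edge_nonempty := by
    intro e he
    simp only [Finset.mem_filter] at he
    exact H.edge_nonempty e he.1

/-- `X` is a vertex-cut of `H` if deleting `X` leaves a disconnected hypergraph. -/
def IsVertexCut (H : FinHypergraph) (X : Finset ℕ) : Prop :=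
  X ⊆ H.verts ∧ ¬ (H.induce (H.verts \ X)).Connected

open Classical in
/-- The vertex-connectivity of `H`: the minimum cardinality of a vertex-cut if one
exists, and `|V(H)| - 1` otherwise. -/
noncomputable def kappa (H : FinHypergraph) : ℕ :=
  if ∃ X, H.IsVertexCut X then sInf {m | ∃ X, H.IsVertexCut X ∧ X.card = m}
  else H.verts.card - 1

/-- `κ̄(H)`: the maximum vertex-connectivity over all subhypergraphs of `H`. -/
noncomputable def kappaBar (H : FinHypergraph) : ℕ :=
  sSup {m | ∃ H' : FinHypergraph, H'.IsSub H ∧ H'.kappa = m}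

/-- `H + e`: add the edge `e` (a non-empty subset of the vertices) to `H`. -/
def addEdge (H : FinHypergraph) (e : Finset ℕ) : FinHypergraph where
  verts := H.verts
  edges := if e ⊆ H.verts ∧ e.Nonempty then insert e H.edges else H.edges
  edge_sub := by
    intro f hf
    split at hf
    · rcases Finset.mem_insert.mp hf with rfl | hf
      · exact (by assumption : f ⊆ H.verts ∧ f.Nonempty).1
      · exact H.edge_sub f hf
    · exact H.edge_sub f hf
  edge_nonempty := by
    intro f hf
    split at hf
    · rcases Finset.mem_insert.mp hf with rfl | hf
      · exact (by assumption : f ⊆ H.verts ∧ f.Nonempty).2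
      · exact H.edge_nonempty f hf
    · exact H.edge_nonempty f hf

/-- `H + F`: add a set `F` of edges to `H`. -/
def addEdges (H : FinHypergraph) (F : Finset (Finset ℕ)) : FinHypergraph where
  verts := H.verts
  edges := H.edges ∪ F.filter (fun e => e ⊆ H.verts ∧ e.Nonempty)
  edge_sub := by
    intro f hf
    rcases Finset.mem_union.mp hf with hf | hf
    · exact H.edge_sub f hf
    · exact (Finset.mem_filter.mp hf).2.1
  edge_nonempty := by
    intro f hf
    rcases Finset.mem_union.mp hf with hf | hf
    · exact H.edge_nonempty f hf
    · exact (Finset.mem_filter.mp hf).2.2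

/-- `H` is vertex-`k`-maximal (as an `r`-uniform hypergraph): `κ̄(H) ≤ k`, but adding
any edge of the complement `H^c` creates a subhypergraph of connectivity at least `k + 1`. -/
def VertexKMaximal (H : FinHypergraph) (r k : ℕ) : Prop :=
  H.IsUniform r ∧ H.kappaBar ≤ k ∧
    ∀ e : Finset ℕ, e ⊆ H.verts → e.card = r → e ∉ H.edges →
      k + 1 ≤ (H.addEdge e).kappaBar

/-- The complete `r`-uniform hypergraph on the vertex set `V`. -/
def completeHG (V : Finset ℕ) (r : ℕ) : FinHypergraph where
  verts := V
  edges := (V.powersetCard r).filter (fun e => e.Nonempty)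
  edge_sub := by
    intro e he
    simp only [Finset.mem_filter, Finset.mem_powersetCard] at he
    exact he.1.1
  edge_nonempty := by
    intro e he
    exact (Finset.mem_filter.mp he).2

/-- The hypergraph on vertex set `V` with no edges. -/
def emptyHG (V : Finset ℕ) : FinHypergraph where
  verts := V
  edges := ∅
  edge_sub := by simp
  edge_nonempty := by simp

/-- The `r`-join `H₁ ∨_r H₂`: the union of `H₁` and `H₂` together with all
`r`-element subsets of `V(H₁) ∪ V(H₂)` meeting both `V(H₁)` and `V(H₂)`. -/
def rJoin (H1 H2 : FinHypergraph) (r : ℕ) : FinHypergraph where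
  verts := H1.verts ∪ H2.verts
  edges := H1.edges ∪ H2.edges ∪
    ((H1.verts ∪ H2.verts).powersetCard r).filter
      (fun e => (e ∩ H1.verts).Nonempty ∧ (e ∩ H2.verts).Nonempty)
  edge_sub := by
    intro e he
    rcases Finset.mem_union.mp he with he | he
    · rcases Finset.mem_union.mp he with he | he
      · exact (H1.edge_sub e he).trans Finset.subset_union_left
      · exact (H2.edge_sub e he).trans Finset.subset_union_right
    · exact (Finset.mem_powersetCard.mp (Finset.mem_filter.mp he).1).1
  edge_nonempty := by
    intro e he
    rcases Finset.mem_union.mp he with he | he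
    · rcases Finset.mem_union.mp he with he | he
      · exact H1.edge_nonempty e he
      · exact H2.edge_nonempty e he
    · obtain ⟨x, hx⟩ := (Finset.mem_filter.mp he).2.1
      exact ⟨x, (Finset.mem_inter.mp hx).1⟩

/-- The union of two hypergraphs. -/
def hUnion (H1 H2 : FinHypergraph) : FinHypergraph where
  verts := H1.verts ∪ H2.verts
  edges := H1.edges ∪ H2.edges
  edge_sub := by
    intro e he
    rcases Finset.mem_union.mp he with he | he
    · exact (H1.edge_sub e he).trans Finset.subset_union_left
    · exact (H2.edge_sub e he).trans Finset.subset_union_right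
  edge_nonempty := by
    intro e he
    rcases Finset.mem_union.mp he with he | he
    · exact H1.edge_nonempty e he
    · exact H2.edge_nonempty e he

/-- The union of the hypergraphs `f 0, …, f (m-1)`. -/
def unionOver (m : ℕ) (f : ℕ → FinHypergraph) : FinHypergraph where
  verts := (Finset.range m).biUnion (fun i => (f i).verts)
  edges := (Finset.range m).biUnion (fun i => (f i).edges)
  edge_sub := by
    intro e he
    obtain ⟨i, hi, hei⟩ := Finset.mem_biUnion.mp he
    exact ((f i).edge_sub e hei).trans (Finset.subset_biUnion_of_mem (fun i => (f i).verts) hi)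
  edge_nonempty := by
    intro e he
    obtain ⟨i, _, hei⟩ := Finset.mem_biUnion.mp he
    exact (f i).edge_nonempty e hei

/-- `C` is a component of `G`: a maximal connected subhypergraph. -/
def IsComponent (G C : FinHypergraph) : Prop :=
  C.IsSub G ∧ C.Connected ∧
    ∀ C' : FinHypergraph, C'.IsSub G → C'.Connected → C.IsSub C' → C' = C

/-- `(S, H₁, H₂)` is a separation triple of `H`: `S` is a minimum vertex-cut,
`H₁ = H[S ∪ V(C₁)]` and `H₂ = H[S ∪ V(C₂)]`, where `C₁` is a component of `H - S`
and `C₂ = H - (S ∪ V(C₁))`. -/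
def IsSeparationTriple (H : FinHypergraph) (S : Finset ℕ) (H1 H2 : FinHypergraph) : Prop :=
  H.IsVertexCut S ∧ (∀ X : Finset ℕ, H.IsVertexCut X → S.card ≤ X.card) ∧
    ∃ C1 : FinHypergraph, IsComponent (H.induce (H.verts \ S)) C1 ∧
      H1 = H.induce (S ∪ C1.verts) ∧
      H2 = H.induce (S ∪ (H.verts \ (S ∪ C1.verts)))

end FinHypergraph

/-!
Call an `r`-set `f ∉ E(H)` critical if `κ̄(H + f) > k`. In a vertex-`k`-maximal hypergraph every
`r`-subset of `V(H)` outside `E(H)` is critical, so it suffices to show that a hypergraph with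
`κ̄(H) ≤ k` on `m` vertices has at most `C(m - k, r)` critical sets. Induct on `m`. A critical `f`
comes with a subhypergraph `W ∋ f` of `H + f` with `κ(W) > k`; hence `m ≥ k + 2`, and `H` has a
vertex cut `S` with `|S| = κ(H) ≤ k`, splitting `V(H) ∖ S` into sides `A` and `B`. As `W - S` is
still connected, `W` lies in `H[S ∪ A] + f` or in `H[S ∪ B] + f` unless `f` avoids `S` and meets
both sides, so every other critical set is critical in one of these two smaller pieces. If
`|S| < k` no crossing `f` is critical, and `C(a, r) + C(b, r) ≤ C(a + b, r)` bounds the sum of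
the bounds for the pieces. If `|S| = k`, the crossing `r`-subsets of `A ∪ B` number
`C(|A| + |B|, r) - C(|A|, r) - C(|B|, r)`, exactly the slack left by the two pieces.
-/

theorem Nat.choose_add_choose_le {r : ℕ} (hr : 0 < r) (x y : ℕ) :
    x.choose r + y.choose r ≤ (x + y).choose r := by
  rw [Nat.add_choose_eq]
  have hsub : {(r, 0), (0, r)} ⊆ Finset.HasAntidiagonal.antidiagonal r := by
    simp [Finset.insert_subset_iff]
  calc x.choose r + y.choose r
      = ∑ ij ∈ {(r, 0), (0, r)}, x.choose ij.1 * y.choose ij.2 := by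
        rw [Finset.sum_pair (by simp [hr.ne'])]
        simp
    _ ≤ _ := Finset.sum_le_sum_of_subset hsub

theorem Finset.card_powersetCard_union_sdiff_add {α : Type*} [DecidableEq α] {A B : Finset α}
    {r : ℕ} (hAB : Disjoint A B) (hr : 0 < r) :
    ((A ∪ B).powersetCard r \ (A.powersetCard r ∪ B.powersetCard r)).card
      + A.card.choose r + B.card.choose r = (A.card + B.card).choose r := by
  have hsub : A.powersetCard r ∪ B.powersetCard r ⊆ (A ∪ B).powersetCard r :=
    Finset.union_subset (Finset.powersetCard_mono Finset.subset_union_left)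
      (Finset.powersetCard_mono Finset.subset_union_right)
  have hdisj : Disjoint (A.powersetCard r) (B.powersetCard r) := by
    refine Finset.disjoint_left.mpr fun s hsA hsB => ?_
    rw [Finset.mem_powersetCard] at hsA hsB
    obtain ⟨x, hx⟩ := Finset.card_pos.mp (hsA.2 ▸ hr)
    exact Finset.disjoint_left.mp hAB (hsA.1 hx) (hsB.1 hx)
  rw [add_assoc, ← Finset.card_powersetCard r A, ← Finset.card_powersetCard r B,
    ← Finset.card_union_of_disjoint hdisj, Finset.card_sdiff_add_card_eq_card hsub,
    Finset.card_powersetCard, Finset.card_union_of_disjoint hAB]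

namespace FinHypergraph

variable {H W G : FinHypergraph} {S A B X Y f : Finset ℕ} {k r : ℕ}

lemma IsSub.refl (H : FinHypergraph) : H.IsSub H := ⟨subset_rfl, subset_rfl⟩

lemma IsSub.trans {H₁ H₂ H₃ : FinHypergraph} (h₁₂ : H₁.IsSub H₂) (h₂₃ : H₂.IsSub H₃) :
    H₁.IsSub H₃ :=
  ⟨h₁₂.1.trans h₂₃.1, h₁₂.2.trans h₂₃.2⟩

lemma mem_induce_edges : f ∈ (H.induce Y).edges ↔ f ∈ H.edges ∧ f ⊆ Y := Finset.mem_filter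

lemma induce_verts_of_subset (hY : Y ⊆ H.verts) : (H.induce Y).verts = Y :=
  Finset.inter_eq_right.mpr hY

lemma induce_isSub (H : FinHypergraph) (Y : Finset ℕ) : (H.induce Y).IsSub H :=
  ⟨Finset.inter_subset_left, Finset.filter_subset _ _⟩

lemma edges_subset_addEdge_edges (H : FinHypergraph) (f : Finset ℕ) :
    H.edges ⊆ (H.addEdge f).edges := by
  show H.edges ⊆ if f ⊆ H.verts ∧ f.Nonempty then insert f H.edges else H.edges
  split_ifs
  exacts [Finset.subset_insert f H.edges, subset_rfl]

lemma addEdge_edges_subset (H : FinHypergraph) (f : Finset ℕ) :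
    (H.addEdge f).edges ⊆ insert f H.edges := by
  show (if f ⊆ H.verts ∧ f.Nonempty then insert f H.edges else H.edges) ⊆ _
  split_ifs
  exacts [subset_rfl, Finset.subset_insert f H.edges]

lemma IsSub.addEdge_induce (hW : W.IsSub (H.addEdge f)) (hWY : W.verts ⊆ Y) :
    W.IsSub ((H.induce Y).addEdge f) := by
  have hWV : W.verts ⊆ (H.induce Y).verts := Finset.subset_inter hW.1 hWY
  refine ⟨hWV, fun g hg => ?_⟩
  have hgV : g ⊆ (H.induce Y).verts := (W.edge_sub g hg).trans hWV
  rcases Finset.mem_insert.mp (H.addEdge_edges_subset f (hW.2 hg)) with rfl | hgH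
  · show g ∈ if g ⊆ (H.induce Y).verts ∧ g.Nonempty then _ else _
    rw [if_pos ⟨hgV, W.edge_nonempty g hg⟩]
    exact Finset.mem_insert_self g _
  · exact edges_subset_addEdge_edges _ f
      (mem_induce_edges.mpr ⟨hgH, hgV.trans Finset.inter_subset_right⟩)

lemma Connected.subset_or_subset (hG : G.Connected) (hAB : Disjoint A B)
    (hV : G.verts ⊆ A ∪ B) (hE : ∀ g ∈ G.edges, g ⊆ A ∨ g ⊆ B) :
    G.verts ⊆ A ∨ G.verts ⊆ B := by
  by_cases hB : G.verts ⊆ B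
  · exact Or.inr hB
  obtain ⟨u, hu, huB⟩ := Finset.not_subset.mp hB
  have huA : u ∈ A := (Finset.mem_union.mp (hV hu)).resolve_right huB
  refine Or.inl fun v hv => ?_
  have hreach := hG u hu v hv
  clear hv
  induction hreach with
  | refl => exact huA
  | tail _ hadj ih =>
    obtain ⟨g, hg, hxg, hyg⟩ := hadj
    exact ((hE g hg).resolve_right fun hgB => Finset.disjoint_left.mp hAB ih (hgB hxg)) hyg

lemma one_lt_card_of_not_connected (h : ¬ G.Connected) : 1 < G.verts.card := by
  simp only [Connected, not_forall] at h
  obtain ⟨u, hu, v, hv, huv⟩ := h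
  exact Finset.one_lt_card.mpr ⟨u, hu, v, hv, fun h => huv (h ▸ Relation.ReflTransGen.refl)⟩

lemma IsVertexCut.card_add_two_le (h : H.IsVertexCut X) : X.card + 2 ≤ H.verts.card := by
  have hlt := one_lt_card_of_not_connected h.2
  rw [induce_verts_of_subset Finset.sdiff_subset, Finset.card_sdiff_of_subset h.1] at hlt
  have := Finset.card_le_card h.1
  omega

lemma kappa_le_card_of_isVertexCut (h : H.IsVertexCut X) : H.kappa ≤ X.card := by
  unfold kappa
  rw [if_pos ⟨X, h⟩]
  exact Nat.sInf_le (show X.card ∈ {m | ∃ X, H.IsVertexCut X ∧ X.card = m} from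
    ⟨X, h, rfl⟩)

lemma kappa_le_card_sub_one (H : FinHypergraph) : H.kappa ≤ H.verts.card - 1 := by
  by_cases hcut : ∃ X, H.IsVertexCut X
  · obtain ⟨X, hX⟩ := hcut
    have := hX.card_add_two_le
    have := kappa_le_card_of_isVertexCut hX
    omega
  · unfold kappa
    rw [if_neg hcut]

lemma exists_isVertexCut_card_eq_kappa (h : H.kappa + 2 ≤ H.verts.card) :
    ∃ S, H.IsVertexCut S ∧ S.card = H.kappa := by
  unfold kappa at h ⊢
  split_ifs at h ⊢ with hcut
  · obtain ⟨X, hX⟩ := hcut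
    exact Nat.sInf_mem (s := {m | ∃ X, H.IsVertexCut X ∧ X.card = m})
      ⟨X.card, X, hX, rfl⟩
  · omega

lemma connected_induce_sdiff_of_card_lt (h : X.card < H.kappa) :
    (H.induce (H.verts \ X)).Connected := by
  by_contra hdisc
  have hcut : H.IsVertexCut (H.verts ∩ X) :=
    ⟨Finset.inter_subset_left, by rwa [Finset.sdiff_inter_self_left]⟩
  have := kappa_le_card_of_isVertexCut hcut
  have := Finset.card_le_card (Finset.inter_subset_right : H.verts ∩ X ⊆ X)
  omega

lemma bddAbove_kappa_of_isSub (H : FinHypergraph) :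
    BddAbove {m | ∃ W : FinHypergraph, W.IsSub H ∧ W.kappa = m} := by
  refine ⟨H.verts.card, ?_⟩
  rintro _ ⟨W, hW, rfl⟩
  have := W.kappa_le_card_sub_one
  have := Finset.card_le_card hW.1
  omega

lemma kappa_le_kappaBar (h : W.IsSub H) : W.kappa ≤ H.kappaBar :=
  le_csSup (bddAbove_kappa_of_isSub H) ⟨W, h, rfl⟩

lemma exists_isSub_kappa_eq_kappaBar (H : FinHypergraph) :
    ∃ W : FinHypergraph, W.IsSub H ∧ W.kappa = H.kappaBar :=
  Nat.sSup_mem (s := {m | ∃ W : FinHypergraph, W.IsSub H ∧ W.kappa = m})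
    ⟨H.kappa, H, IsSub.refl H, rfl⟩ (bddAbove_kappa_of_isSub H)

lemma kappaBar_mono (h : W.IsSub H) : W.kappaBar ≤ H.kappaBar := by
  obtain ⟨W', hW', hκ⟩ := exists_isSub_kappa_eq_kappaBar W
  exact hκ ▸ kappa_le_kappaBar (hW'.trans h)

lemma exists_isSub_addEdge_of_lt_kappaBar (hH : H.kappaBar ≤ k)
    (hf : k < (H.addEdge f).kappaBar) :
    ∃ W : FinHypergraph, W.IsSub (H.addEdge f) ∧ k < W.kappa ∧ f ∈ W.edges := by
  obtain ⟨W, hW, hκ⟩ := exists_isSub_kappa_eq_kappaBar (H.addEdge f)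
  refine ⟨W, hW, hκ ▸ hf, ?_⟩
  by_contra hfW
  have hWH : W.IsSub H := ⟨hW.1, fun g hg =>
    (Finset.mem_insert.mp (H.addEdge_edges_subset f (hW.2 hg))).resolve_left
      fun hgf => hfW (hgf ▸ hg)⟩
  have := kappa_le_kappaBar hWH
  omega

structure IsSeparation (H : FinHypergraph) (S A B : Finset ℕ) : Prop where
  subset : S ⊆ H.verts
  disjoint : Disjoint A B
  sdiff_eq : H.verts \ S = A ∪ B
  subset_or_subset : ∀ g ∈ H.edges, Disjoint g S → g ⊆ A ∨ g ⊆ B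

lemma IsVertexCut.exists_isSeparation (h : H.IsVertexCut S) :
    ∃ A B, H.IsSeparation S A B ∧ A.Nonempty ∧ B.Nonempty := by
  classical
  obtain ⟨hSV, hdisc⟩ := h
  simp only [Connected, induce_verts_of_subset Finset.sdiff_subset, not_forall] at hdisc
  obtain ⟨u, hu, v, hv, huv⟩ := hdisc
  set A := (H.verts \ S).filter (Relation.ReflTransGen (H.induce (H.verts \ S)).Adj u)
  refine ⟨A, (H.verts \ S) \ A,
    ⟨hSV, Finset.disjoint_sdiff,
      (Finset.union_sdiff_of_subset (Finset.filter_subset _ _)).symm, ?_⟩,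
    ⟨u, Finset.mem_filter.mpr ⟨hu, .refl⟩⟩,
    ⟨v, Finset.mem_sdiff.mpr ⟨hv, fun hvA => huv (Finset.mem_filter.mp hvA).2⟩⟩⟩
  intro g hg hgS
  have hgV : g ⊆ H.verts \ S := Finset.subset_sdiff.mpr ⟨H.edge_sub g hg, hgS⟩
  by_cases hgA : ∃ x ∈ g, x ∈ A
  · obtain ⟨x, hxg, hxA⟩ := hgA
    exact Or.inl fun y hyg => Finset.mem_filter.mpr
      ⟨hgV hyg, (Finset.mem_filter.mp hxA).2.tail ⟨g, mem_induce_edges.mpr ⟨hg, hgV⟩, hxg, hyg⟩⟩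
  · push Not at hgA
    exact Or.inr fun y hyg => Finset.mem_sdiff.mpr ⟨hgV hyg, hgA y hyg⟩

namespace IsSeparation

lemma symm (sep : H.IsSeparation S A B) : H.IsSeparation S B A :=
  ⟨sep.subset, sep.disjoint.symm, by rw [sep.sdiff_eq, Finset.union_comm],
    fun g hg hgS => (sep.subset_or_subset g hg hgS).symm⟩

lemma subset_sdiff (sep : H.IsSeparation S A B) : A ⊆ H.verts \ S :=
  sep.sdiff_eq ▸ Finset.subset_union_left

lemma card_verts (sep : H.IsSeparation S A B) :
    H.verts.card = S.card + A.card + B.card := by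
  rw [← Finset.card_sdiff_add_card_eq_card sep.subset, sep.sdiff_eq,
    Finset.card_union_of_disjoint sep.disjoint]
  ring

lemma card_induce_verts (sep : H.IsSeparation S A B) :
    (H.induce (S ∪ A)).verts.card = S.card + A.card := by
  have hA := sep.subset_sdiff
  rw [induce_verts_of_subset (Finset.union_subset sep.subset (hA.trans Finset.sdiff_subset)),
    Finset.card_union_of_disjoint (Finset.disjoint_sdiff.mono_right hA)]

lemma sdiff_subset_or_subset (sep : H.IsSeparation S A B) (hW : W.IsSub (H.addEdge f))
    (hSX : S ⊆ X) (hX : X.card < W.kappa) (hf : f ⊆ W.verts \ X → f ⊆ A ∨ f ⊆ B) :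
    W.verts \ X ⊆ A ∨ W.verts \ X ⊆ B := by
  have hV : (W.induce (W.verts \ X)).verts = W.verts \ X :=
    induce_verts_of_subset Finset.sdiff_subset
  rw [← hV]
  refine (connected_induce_sdiff_of_card_lt hX).subset_or_subset sep.disjoint ?_ ?_
  · rw [hV, ← sep.sdiff_eq]
    exact Finset.sdiff_subset_sdiff hW.1 hSX
  · intro g hg
    obtain ⟨hgW, hgX⟩ := mem_induce_edges.mp hg
    rcases Finset.mem_insert.mp (H.addEdge_edges_subset f (hW.2 hgW)) with rfl | hgH
    · exact hf hgX
    · exact sep.subset_or_subset g hgH ((Finset.subset_sdiff.mp hgX).2.mono_right hSX)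

lemma verts_subset_or_subset (sep : H.IsSeparation S A B) (hW : W.IsSub (H.addEdge f))
    (hS : S.card < W.kappa) (hf : Disjoint f S → f ⊆ A ∨ f ⊆ B) :
    W.verts ⊆ S ∪ A ∨ W.verts ⊆ S ∪ B :=
  (sep.sdiff_subset_or_subset hW subset_rfl hS
    fun hfW => hf (Finset.subset_sdiff.mp hfW).2).imp sdiff_le_iff.mp sdiff_le_iff.mp

lemma sdiff_insert_subset (sep : H.IsSeparation S A B) (hW : W.IsSub (H.addEdge f))
    (hfW : f ∈ W.edges) (hS : S.card + 2 ≤ W.kappa) {x y : ℕ} (hx : x ∈ f) (hy : y ∈ f)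
    (hxA : x ∈ A) (hyB : y ∈ B) :
    W.verts \ insert x S ⊆ B := by
  have hyW : y ∈ W.verts \ insert x S := by
    refine Finset.mem_sdiff.mpr ⟨W.edge_sub f hfW hy, fun hyxS => ?_⟩
    rcases Finset.mem_insert.mp hyxS with rfl | hyS
    · exact Finset.disjoint_left.mp sep.disjoint hxA hyB
    · exact (Finset.mem_sdiff.mp (sep.symm.subset_sdiff hyB)).2 hyS
  have hxS : S.card + 1 < W.kappa := by omega
  refine (sep.sdiff_subset_or_subset hW (Finset.subset_insert x S)
    ((Finset.card_insert_le x S).trans_lt hxS) fun hfx => ?_).resolve_left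
      fun hA => Finset.disjoint_left.mp sep.disjoint (hA hyW) hyB
  exact absurd (hfx hx) fun h => (Finset.mem_sdiff.mp h).2 (Finset.mem_insert_self x S)

/-- If `f` met both sides, deleting `S` and a vertex `x ∈ f ∩ A` would leave the rest of `W`
inside `B`, and deleting `S` and `y ∈ f ∩ B` would leave it inside `A`; a third vertex of `W`
outside `S` would lie in both. -/
lemma subset_or_subset_of_disjoint (sep : H.IsSeparation S A B) (hW : W.IsSub (H.addEdge f))
    (hfW : f ∈ W.edges) (hS : S.card + 2 ≤ W.kappa) (hfS : Disjoint f S) :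
    f ⊆ A ∨ f ⊆ B := by
  by_contra! hcross
  obtain ⟨x, hxf, hxB⟩ := Finset.not_subset.mp hcross.2
  obtain ⟨y, hyf, hyA⟩ := Finset.not_subset.mp hcross.1
  have hfAB : f ⊆ A ∪ B :=
    sep.sdiff_eq ▸ Finset.subset_sdiff.mpr ⟨(W.edge_sub f hfW).trans hW.1, hfS⟩
  have hxA : x ∈ A := (Finset.mem_union.mp (hfAB hxf)).resolve_right hxB
  have hyB : y ∈ B := (Finset.mem_union.mp (hfAB hyf)).resolve_left hyA
  have hB := sep.sdiff_insert_subset hW hfW hS hxf hyf hxA hyB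
  have hA := sep.symm.sdiff_insert_subset hW hfW hS hyf hxf hyB hxA
  obtain ⟨z, hz⟩ : (W.verts \ insert x (insert y S)).Nonempty := by
    rw [← Finset.card_pos]
    have := Finset.le_card_sdiff (insert x (insert y S)) W.verts
    have := (Finset.card_insert_le x _).trans (Nat.succ_le_succ (Finset.card_insert_le y S))
    have := W.kappa_le_card_sub_one
    omega
  have hzx : z ∈ W.verts \ insert x S :=
    Finset.sdiff_subset_sdiff subset_rfl
      (Finset.insert_subset_insert x (Finset.subset_insert y S)) hz
  have hzy : z ∈ W.verts \ insert y S :=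
    Finset.sdiff_subset_sdiff subset_rfl (Finset.subset_insert x _) hz
  exact Finset.disjoint_left.mp sep.disjoint (hA hzy) (hB hzx)

end IsSeparation

noncomputable def criticalNonEdges (H : FinHypergraph) (r k : ℕ) : Finset (Finset ℕ) :=
  (H.verts.powersetCard r \ H.edges).filter fun f => k < (H.addEdge f).kappaBar

lemma mem_criticalNonEdges :
    f ∈ H.criticalNonEdges r k ↔
      f ⊆ H.verts ∧ f.card = r ∧ f ∉ H.edges ∧ k < (H.addEdge f).kappaBar := by
  simp only [criticalNonEdges, Finset.mem_filter, Finset.mem_sdiff, Finset.mem_powersetCard,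
    and_assoc]

lemma mem_criticalNonEdges_induce (hf : f ∈ H.criticalNonEdges r k)
    (hW : W.IsSub (H.addEdge f)) (hfW : f ∈ W.edges) (hk : k < W.kappa) (hWY : W.verts ⊆ Y) :
    f ∈ (H.induce Y).criticalNonEdges r k := by
  obtain ⟨-, hfr, hfH, -⟩ := mem_criticalNonEdges.mp hf
  have hWY' := hW.addEdge_induce hWY
  exact mem_criticalNonEdges.mpr ⟨(W.edge_sub f hfW).trans hWY'.1, hfr,
    fun hfY => hfH (mem_induce_edges.mp hfY).1, hk.trans_le (kappa_le_kappaBar hWY')⟩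

namespace IsSeparation

lemma mem_criticalNonEdges_induce_or (sep : H.IsSeparation S A B) (hH : H.kappaBar ≤ k)
    (hS : S.card ≤ k) (hf : f ∈ H.criticalNonEdges r k) (hfS : Disjoint f S → f ⊆ A ∨ f ⊆ B) :
    f ∈ (H.induce (S ∪ A)).criticalNonEdges r k ∪ (H.induce (S ∪ B)).criticalNonEdges r k := by
  obtain ⟨W, hW, hk, hfW⟩ :=
    exists_isSub_addEdge_of_lt_kappaBar hH (mem_criticalNonEdges.mp hf).2.2.2
  exact Finset.mem_union.mpr ((sep.verts_subset_or_subset hW (by omega) hfS).imp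
    (mem_criticalNonEdges_induce hf hW hfW hk) (mem_criticalNonEdges_induce hf hW hfW hk))

lemma criticalNonEdges_subset (sep : H.IsSeparation S A B) (hH : H.kappaBar ≤ k)
    (hS : S.card ≤ k) :
    H.criticalNonEdges r k ⊆
      (H.induce (S ∪ A)).criticalNonEdges r k ∪ (H.induce (S ∪ B)).criticalNonEdges r k ∪
        ((A ∪ B).powersetCard r \ (A.powersetCard r ∪ B.powersetCard r)) := by
  intro f hf
  by_cases hfS : Disjoint f S → f ⊆ A ∨ f ⊆ B
  · exact Finset.mem_union_left _ (sep.mem_criticalNonEdges_induce_or hH hS hf hfS)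
  push Not at hfS
  obtain ⟨hfV, hfr, -⟩ := mem_criticalNonEdges.mp hf
  refine Finset.mem_union_right _ (Finset.mem_sdiff.mpr ⟨Finset.mem_powersetCard.mpr
    ⟨sep.sdiff_eq ▸ Finset.subset_sdiff.mpr ⟨hfV, hfS.1⟩, hfr⟩, ?_⟩)
  simp only [Finset.mem_union, Finset.mem_powersetCard, not_or, not_and]
  exact ⟨fun h => absurd h hfS.2.1, fun h => absurd h hfS.2.2⟩

lemma criticalNonEdges_subset_of_lt (sep : H.IsSeparation S A B) (hH : H.kappaBar ≤ k)
    (hS : S.card < k) :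
    H.criticalNonEdges r k ⊆
      (H.induce (S ∪ A)).criticalNonEdges r k ∪ (H.induce (S ∪ B)).criticalNonEdges r k := by
  intro f hf
  obtain ⟨W, hW, hk, hfW⟩ :=
    exists_isSub_addEdge_of_lt_kappaBar hH (mem_criticalNonEdges.mp hf).2.2.2
  exact sep.mem_criticalNonEdges_induce_or hH hS.le hf
    (sep.subset_or_subset_of_disjoint hW hfW (by omega))

end IsSeparation

theorem card_criticalNonEdges_le (hr : 0 < r) (hH : H.kappaBar ≤ k) :
    (H.criticalNonEdges r k).card ≤ (H.verts.card - k).choose r := by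
  induction hm : H.verts.card using Nat.strong_induction_on generalizing H with
  | _ m ih =>
  obtain hnone | ⟨f, hf⟩ := (H.criticalNonEdges r k).eq_empty_or_nonempty
  · simp [hnone]
  obtain ⟨W, hW, hkW, -⟩ :=
    exists_isSub_addEdge_of_lt_kappaBar hH (mem_criticalNonEdges.mp hf).2.2.2
  have hκ : H.kappa ≤ k := (kappa_le_kappaBar (IsSub.refl H)).trans hH
  have hkm : k + 2 ≤ m := by
    have := W.kappa_le_card_sub_one
    have : W.verts.card ≤ H.verts.card := Finset.card_le_card hW.1
    omega
  obtain ⟨S, hcut, hSκ⟩ := exists_isVertexCut_card_eq_kappa (H := H) (by omega)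
  obtain ⟨A, B, sep, hA, hB⟩ := hcut.exists_isSeparation
  have ih_piece : ∀ {A B}, H.IsSeparation S A B → B.Nonempty →
      ((H.induce (S ∪ A)).criticalNonEdges r k).card ≤ (S.card + A.card - k).choose r := by
    intro A B sep hB
    have := sep.card_verts
    have := hB.card_pos
    exact ih _ (by omega) ((kappaBar_mono (induce_isSub H _)).trans hH) sep.card_induce_verts
  have hcardA := ih_piece sep hB
  have hcardB := ih_piece sep.symm hA
  have hm' := sep.card_verts
  rcases (show S.card < k ∨ S.card = k by omega) with hlt | heq
  · calc (H.criticalNonEdges r k).card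
        ≤ (S.card + A.card - k).choose r + (S.card + B.card - k).choose r :=
          (Finset.card_le_card (sep.criticalNonEdges_subset_of_lt hH hlt)).trans
            ((Finset.card_union_le _ _).trans (add_le_add hcardA hcardB))
      _ ≤ (S.card + A.card - k + (S.card + B.card - k)).choose r :=
          Nat.choose_add_choose_le hr _ _
      _ ≤ (m - k).choose r := Nat.choose_le_choose r (by omega)
  · have hcover := (Finset.card_le_card (sep.criticalNonEdges_subset (r := r) hH heq.le)).trans
      ((Finset.card_union_le _ _).trans (add_le_add (Finset.card_union_le _ _) le_rfl))
    have hcross := Finset.card_powersetCard_union_sdiff_add sep.disjoint hr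
    rw [heq, Nat.add_sub_cancel_left] at hcardA hcardB
    rw [show m - k = A.card + B.card by omega]
    omega

lemma VertexKMaximal.criticalNonEdges_eq (hH : H.VertexKMaximal r k) :
    H.criticalNonEdges r k = H.verts.powersetCard r \ H.edges :=
  Finset.filter_true_of_mem fun f hf => by
    obtain ⟨hfP, hfE⟩ := Finset.mem_sdiff.mp hf
    obtain ⟨hfV, hfr⟩ := Finset.mem_powersetCard.mp hfP
    exact hH.2.2 f hfV hfr hfE

end FinHypergraph

theorem stmt_8_general (n k r : ℕ) (hr : 2 ≤ r)
    (H : FinHypergraph) (hcard : H.verts.card = n) (hH : H.VertexKMaximal r k) :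
    n.choose r - (n - k).choose r ≤ H.edges.card := by
  have hbound := FinHypergraph.card_criticalNonEdges_le (by omega : 0 < r) hH.2.1
  have hE : H.edges ⊆ H.verts.powersetCard r := fun g hg =>
    Finset.mem_powersetCard.mpr ⟨H.edge_sub g hg, hH.1 g hg⟩
  rw [hH.criticalNonEdges_eq, Finset.card_sdiff_of_subset hE, Finset.card_powersetCard,
    hcard] at hbound
  omega

/-- Every vertex-`k`-maximal `r`-uniform hypergraph on `n ≥ k + 1`
vertices has at least `C(n,r) - C(n-k,r)` edges. -/
theorem stmt_8 (n k r : ℕ) (hk : 2 ≤ k) (hr : 2 ≤ r) (hn : k + 1 ≤ n)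
    (H : FinHypergraph) (hcard : H.verts.card = n) (hH : H.VertexKMaximal r k) :
    n.choose r - (n - k).choose r ≤ H.edges.card :=
  stmt_8_general n k r hr H hcard hH
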